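/- arXiv:1612.09362 — 4 statements merged into one kernel-verified Lean document; each statement's English description precedes it below -/
import Mathlib

section
/- The minimal polynomial of β over ℚ is f(x) = x⁴ + 2Dx² + (D² − DB²). In particular f is irreducible over ℚ and [F : ℚ] = 4. -/
/-!
Since `β² = -(D + B√D)`, we get `(β² + D)² = B²D`, so `β` is a root of `f`. Because
`D² - DB² = DC²`, the polynomial `f` has integer coefficients and is Eisenstein at every prime
`p ∣ D`: a prime dividing both `D = B² + C²` and `C` would divide `B` too, so `p² ∣ D`, contradicting
squarefreeness; hence `p² ∤ DC²`.
-/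

open IntermediateField

namespace Polynomial

section Biquadratic

variable {R : Type*} [CommRing R]

lemma natDegree_biquadratic [Nontrivial R] (a b : R) :
    (X ^ 4 + C a * X ^ 2 + C b).natDegree = 4 := by
  compute_degree!

lemma monic_biquadratic (a b : R) : (X ^ 4 + C a * X ^ 2 + C b).Monic := by
  nontriviality R
  rw [Monic, leadingCoeff, natDegree_biquadratic]
  simp [coeff_X_pow]

lemma isEisensteinAt_biquadratic {P : Ideal R} (hP : P ≠ ⊤) {a b : R} (ha : a ∈ P) (hb : b ∈ P)
    (hb2 : b ∉ P ^ 2) : (X ^ 4 + C a * X ^ 2 + C b).IsEisensteinAt P := by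
  cases subsingleton_or_nontrivial R
  · exact absurd (Subsingleton.elim P ⊤) hP
  refine ⟨?_, fun {n} hn => ?_, ?_⟩
  · rw [(monic_biquadratic a b).leadingCoeff]
    exact fun h => hP (P.eq_top_of_isUnit_mem h isUnit_one)
  · rw [natDegree_biquadratic] at hn
    interval_cases n <;> simp [coeff_X_pow, coeff_C, ha, hb, P.zero_mem]
  · simpa [coeff_X_pow, coeff_C] using hb2

lemma irreducible_biquadratic_of_eisenstein {p a b : ℤ} (hp : Prime p) (ha : p ∣ a)
    (hb : p ∣ b) (hb2 : ¬ p ^ 2 ∣ b) :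
    Irreducible (X ^ 4 + C (a : ℚ) * X ^ 2 + C (b : ℚ)) := by
  have hP : (Ideal.span {p}).IsPrime := (Ideal.span_singleton_prime hp.ne_zero).mpr hp
  have hEis := isEisensteinAt_biquadratic hP.ne_top (Ideal.mem_span_singleton.mpr ha)
    (Ideal.mem_span_singleton.mpr hb)
    (by rwa [Ideal.span_singleton_pow, Ideal.mem_span_singleton])
  have hIrr := hEis.irreducible hP (monic_biquadratic a b).isPrimitive
    (by rw [natDegree_biquadratic]; norm_num)
  simpa using (IsPrimitive.Int.irreducible_iff_irreducible_map_cast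
    (monic_biquadratic a b).isPrimitive).mp hIrr

end Biquadratic

end Polynomial

lemma Nat.Prime.not_dvd_right_of_dvd_squarefree_sq_add_sq {p m n : ℕ} (hp : p.Prime)
    (hsf : Squarefree (m ^ 2 + n ^ 2)) (hpd : p ∣ m ^ 2 + n ^ 2) : ¬ p ∣ n := by
  intro hn
  have hm : p ∣ m := hp.dvd_of_dvd_pow ((Nat.dvd_add_left (dvd_pow hn two_ne_zero)).mp hpd)
  have hpp : p * p ∣ m ^ 2 + n ^ 2 := by
    rw [sq, sq]
    exact dvd_add (mul_dvd_mul hm hm) (mul_dvd_mul hn hn)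
  exact hp.not_isUnit (hsf p hpp)

lemma Nat.Prime.not_sq_dvd_mul_sq_of_dvd_squarefree_sq_add_sq {p m n : ℕ} (hp : p.Prime)
    (hsf : Squarefree (m ^ 2 + n ^ 2)) (hpd : p ∣ m ^ 2 + n ^ 2) :
    ¬ p ^ 2 ∣ (m ^ 2 + n ^ 2) * n ^ 2 := by
  intro h
  have hcop : Nat.Coprime (p ^ 2) (n ^ 2) :=
    .pow 2 2 (hp.coprime_iff_not_dvd.mpr (hp.not_dvd_right_of_dvd_squarefree_sq_add_sq hsf hpd))
  exact hp.not_isUnit (hsf p (sq p ▸ hcop.dvd_of_dvd_mul_right h))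

lemma Complex.I_mul_ofReal_sqrt_sq {r : ℝ} (hr : 0 ≤ r) : (I * (√r : ℂ)) ^ 2 = -r := by
  rw [mul_pow, I_sq, ← ofReal_pow, Real.sq_sqrt hr]
  ring

/-- Let `B, C, D` be positive integers with `D = B² + C²` squarefree, and let
`β = i·√(D + B√D) ∈ ℂ`. Then the minimal polynomial of `β` over `ℚ` is
`f(x) = x⁴ + 2Dx² + (D² − DB²)`; in particular `f` is irreducible over `ℚ` and
`[ℚ(β) : ℚ] = 4`. -/
theorem statement3 (B C D : ℕ) (hB : 0 < B) (hC : 0 < C) (hD : D = B ^ 2 + C ^ 2)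
    (hsf : Squarefree D)
    (β : ℂ)
    (hβ : β = Complex.I * ((Real.sqrt ((D : ℝ) + (B : ℝ) * Real.sqrt (D : ℝ)) : ℝ) : ℂ)) :
    minpoly ℚ β =
      Polynomial.X ^ 4 + Polynomial.C (2 * (D : ℚ)) * Polynomial.X ^ 2 +
        Polynomial.C ((D : ℚ) ^ 2 - (D : ℚ) * (B : ℚ) ^ 2) ∧
    Irreducible
      (Polynomial.X ^ 4 + Polynomial.C (2 * (D : ℚ)) * Polynomial.X ^ 2 +
        Polynomial.C ((D : ℚ) ^ 2 - (D : ℚ) * (B : ℚ) ^ 2)) ∧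
    Module.finrank ℚ ℚ⟮β⟯ = 4 := by
  set f : Polynomial ℚ := Polynomial.X ^ 4 + Polynomial.C (2 * (D : ℚ)) * Polynomial.X ^ 2 +
    Polynomial.C ((D : ℚ) ^ 2 - (D : ℚ) * (B : ℚ) ^ 2)
  have hf : f.Monic := Polynomial.monic_biquadratic _ _
  have hDQ : (D : ℚ) = B ^ 2 + C ^ 2 := by exact_mod_cast hD
  rw [hD] at hsf
  obtain ⟨p, hp, hpD⟩ := Nat.exists_prime_and_dvd (n := B ^ 2 + C ^ 2) (by nlinarith)
  have hirr : Irreducible f := by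
    convert Polynomial.irreducible_biquadratic_of_eisenstein (Nat.prime_iff_prime_int.mp hp)
      (a := 2 * (B ^ 2 + C ^ 2 : ℕ)) (b := (B ^ 2 + C ^ 2 : ℕ) * C ^ 2)
      (dvd_mul_of_dvd_right (Int.natCast_dvd_natCast.mpr hpD) _)
      (dvd_mul_of_dvd_left (Int.natCast_dvd_natCast.mpr hpD) _)
      (by exact_mod_cast hp.not_sq_dvd_mul_sq_of_dvd_squarefree_sq_add_sq hsf hpD) using 3
    · push_cast; rw [hDQ]
    · push_cast; rw [hDQ]; ring
  have hroot : Polynomial.aeval β f = 0 := by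
    have hβsq : β ^ 2 = -(D + B * √(D : ℝ) : ℝ) := hβ ▸ Complex.I_mul_ofReal_sqrt_sq (by positivity)
    have hsq : (√(D : ℝ) : ℂ) ^ 2 = D := by
      rw [← Complex.ofReal_pow, Real.sq_sqrt (Nat.cast_nonneg D), Complex.ofReal_natCast]
    simp only [f, map_add, map_mul, map_pow, Polynomial.aeval_X, Polynomial.aeval_C, eq_ratCast]
    push_cast at hβsq ⊢
    linear_combination (β ^ 2 + D - B * (√(D : ℝ) : ℂ)) * hβsq + (B : ℂ) ^ 2 * hsq
  have hmin : minpoly ℚ β = f := (minpoly.eq_of_irreducible_of_monic hirr hroot hf).symm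
  refine ⟨hmin, hirr, ?_⟩
  rw [adjoin.finrank ⟨f, hf, hroot⟩, hmin, Polynomial.natDegree_biquadratic]
end

section
/- Let a, b ∈ O_F ∩ U_m satisfy a ≡ b (mod P_{m+1}) and N(a − b) < N(P_{m+1})². Then a/b ∈ U′₁. -/
/-!
Write `a - b = π t`. Every nonzero prime `Q` outside `S_m` has norm at least `N(P_{m+1})`, so
`t ∈ Q` would give `N(P_{m+1})² ≤ N(P_{m+1}) N(Q) ≤ N(a - b)`, contradicting the hypothesis.
Hence `t`, and with it `w = t / b`, is an `S_m`-unit, and `a / b = 1 + π w` is one of the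
generators of `U′₁`.
-/

open IntermediateField NumberField

noncomputable section

/-- `β = i·√(D + B√D)` (positive real square roots). -/
def qβ (B D : ℕ) : ℂ :=
  Complex.I * ((Real.sqrt ((D : ℝ) + (B : ℝ) * Real.sqrt (D : ℝ)) : ℝ) : ℂ)

/-- The imaginary cyclic quartic field `F = ℚ(β) = ℚ(√(−(D + B√D))) ⊆ ℂ`. -/
def qF (B D : ℕ) : IntermediateField ℚ ℂ := ℚ⟮qβ B D⟯

/-- `x` is an `S`-unit of `F`: `x ≠ 0` and `x` has valuation zero at every nonzero prime
ideal of `O_F` not belonging to `S` (equivalently, at every such prime `P`, `x` can be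
written as a quotient `u/v` of elements of `O_F` that both lie outside `P`). -/
def IsSUnit {B D : ℕ} (S : Set (Ideal (𝓞 (qF B D)))) (x : qF B D) : Prop :=
  x ≠ 0 ∧ ∀ P : Ideal (𝓞 (qF B D)), P.IsPrime → P ≠ ⊥ → P ∉ S →
    ∃ u v : 𝓞 (qF B D), u ∉ P ∧ v ∉ P ∧ x * (v : qF B D) = (u : qF B D)

open Polynomial in
theorem qβ_isIntegral (B D : ℕ) : IsIntegral ℚ (qβ B D) := by
  have hβ2 : qβ B D ^ 2 = -(((D : ℝ) + B * Real.sqrt D : ℝ) : ℂ) := by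
    rw [qβ, mul_pow, Complex.I_sq, ← Complex.ofReal_pow, Real.sq_sqrt (by positivity)]
    ring
  have hsqrt : ((Real.sqrt D : ℝ) : ℂ) ^ 2 = D := by
    rw [← Complex.ofReal_pow, Real.sq_sqrt (by positivity)]
    norm_num
  -- `β² = -(D + B√D)` is a root of `X² + 2D X + D² - B² D`
  refine ⟨X ^ 4 + (C (2 * D : ℚ) * X ^ 2 + C ((D : ℚ) ^ 2 - (B : ℚ) ^ 2 * D)), ?_, ?_⟩
  · refine monic_X_pow_add (lt_of_le_of_lt (b := (2 : WithBot ℕ)) ?_ (by norm_num))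
    compute_degree
  · simp only [eval₂_add, eval₂_mul, eval₂_pow, eval₂_X, eval₂_C]
    rw [show qβ B D ^ 4 = (qβ B D ^ 2) ^ 2 by ring, hβ2]
    norm_num
    linear_combination (B : ℂ) ^ 2 * hsqrt

instance (B D : ℕ) : NumberField (qF B D) where
  to_finiteDimensional := adjoin.finiteDimensional (qβ_isIntegral B D)

theorem Ideal.absNorm_eq_natCard {S : Type*} [CommRing S] [IsDedekindDomain S]
    [Module.Free ℤ S] (I : Ideal S) : Ideal.absNorm I = Nat.card (S ⧸ I) :=
  (Ideal.absNorm_apply I).trans (Submodule.cardQuot_apply _)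

theorem Ideal.notMem_mul_of_absNorm_lt {S : Type*} [CommRing S] [IsDedekindDomain S]
    [Module.Free ℤ S] [Module.Finite ℤ S] {x : S} {I J : Ideal S} (hx : x ≠ 0)
    (hN : Ideal.absNorm (Ideal.span {x}) < Ideal.absNorm I * Ideal.absNorm J) :
    x ∉ I * J := by
  intro hxIJ
  have hdvd : Ideal.absNorm (I * J) ∣ Ideal.absNorm (Ideal.span {x}) :=
    map_dvd Ideal.absNorm (Ideal.dvd_span_singleton.mpr hxIJ)
  have hpos : 0 < Ideal.absNorm (Ideal.span {x}) := by
    rw [Nat.pos_iff_ne_zero, Ne, Ideal.absNorm_eq_zero_iff, Ideal.span_singleton_eq_bot]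
    exact hx
  rw [map_mul] at hdvd
  exact absurd (Nat.le_of_dvd hpos hdvd) (not_le.mpr hN)

theorem NumberField.natCast_absNorm_span_singleton {K : Type*} [Field K] [NumberField K]
    (x : 𝓞 K) : (Ideal.absNorm (Ideal.span {x}) : ℚ) = |Algebra.norm ℚ (x : K)| := by
  rw [Ideal.absNorm_span_singleton, Nat.cast_natAbs, Int.cast_abs, Algebra.coe_norm_int]

theorem natCard_quotient_succ_le_of_notMem {R : Type*} [CommRing R] (P : ℕ → Ideal R)
    (hPsurj : ∀ Q : Ideal R, Q.IsPrime → Q ≠ ⊥ → ∃ i, 1 ≤ i ∧ P i = Q)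
    (hPmono : ∀ i j, 1 ≤ i → i ≤ j → Nat.card (R ⧸ P i) ≤ Nat.card (R ⧸ P j))
    {m : ℕ} {Q : Ideal R} (hQ : Q.IsPrime) (hQ0 : Q ≠ ⊥)
    (hQS : Q ∉ {Q | ∃ i, 1 ≤ i ∧ i ≤ m ∧ Q = P i}) :
    Nat.card (R ⧸ P (m + 1)) ≤ Nat.card (R ⧸ Q) := by
  obtain ⟨j, hj, rfl⟩ := hPsurj Q hQ hQ0
  have hmj : m < j := not_le.mp fun hjm => hQS ⟨j, hj, hjm, rfl⟩
  exact hPmono (m + 1) j (Nat.le_add_left 1 m) hmj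

namespace IsSUnit

variable {B D : ℕ} {S : Set (Ideal (𝓞 (qF B D)))}

theorem div {x y : qF B D} (hx : IsSUnit S x) (hy : IsSUnit S y) : IsSUnit S (x / y) := by
  refine ⟨div_ne_zero hx.1 hy.1, fun Q hQ hQ0 hQS => ?_⟩
  obtain ⟨u, v, hu, hv, hxv⟩ := hx.2 Q hQ hQ0 hQS
  obtain ⟨u', v', hu', hv', hyv⟩ := hy.2 Q hQ hQ0 hQS
  refine ⟨u * v', v * u', fun h => (hQ.mem_or_mem h).elim hu hv',
    fun h => (hQ.mem_or_mem h).elim hv hu', ?_⟩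
  push_cast
  rw [div_mul_eq_mul_div, div_eq_iff hy.1]
  linear_combination (v' * y : qF B D) * hxv - (x * v) * hyv

theorem coe_of_forall_notMem {t : 𝓞 (qF B D)} (ht : t ≠ 0)
    (h : ∀ Q : Ideal (𝓞 (qF B D)), Q.IsPrime → Q ≠ ⊥ → Q ∉ S → t ∉ Q) :
    IsSUnit S (t : qF B D) :=
  ⟨RingOfIntegers.coe_ne_zero_iff.mpr ht, fun Q hQ hQ0 hQS =>
    ⟨t, 1, h Q hQ hQ0 hQS, Q.one_notMem, by simp⟩⟩

end IsSUnit

theorem statement12_general (B D : ℕ)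
    (P : ℕ → Ideal (𝓞 (qF B D)))
    (hPsurj : ∀ Q : Ideal (𝓞 (qF B D)), Q.IsPrime → Q ≠ ⊥ → ∃ i, 1 ≤ i ∧ P i = Q)
    (hPmono : ∀ i j, 1 ≤ i → i ≤ j →
      Nat.card (𝓞 (qF B D) ⧸ P i) ≤ Nat.card (𝓞 (qF B D) ⧸ P j))
    (m : ℕ)
    (π : 𝓞 (qF B D)) (hπ : P (m + 1) = Ideal.span {π})
    (a b : 𝓞 (qF B D))
    (ha : IsSUnit {Q | ∃ i, 1 ≤ i ∧ i ≤ m ∧ Q = P i} ((a : qF B D)))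
    (hb : IsSUnit {Q | ∃ i, 1 ≤ i ∧ i ≤ m ∧ Q = P i} ((b : qF B D)))
    (hmod : a - b ∈ P (m + 1))
    (hN : |(Algebra.norm ℚ ((a : qF B D) - (b : qF B D)) : ℚ)| <
      ((Nat.card (𝓞 (qF B D) ⧸ P (m + 1)) : ℚ)) ^ 2) :
    ∃ u : (qF B D)ˣ,
      u ∈ Subgroup.closure {u : (qF B D)ˣ |
        IsSUnit {Q | ∃ i, 1 ≤ i ∧ i ≤ m ∧ Q = P i} ((u : qF B D)) ∧
        ∃ w : qF B D, IsSUnit {Q | ∃ i, 1 ≤ i ∧ i ≤ m ∧ Q = P i} w ∧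
          (u : qF B D) = 1 + (π : qF B D) * w} ∧
      (u : qF B D) = (a : qF B D) / (b : qF B D) := by
  by_cases hab : a = b
  · subst hab
    exact ⟨1, Subgroup.one_mem _, by rw [Units.val_one, div_self ha.1]⟩
  rw [hπ, Ideal.mem_span_singleton] at hmod
  obtain ⟨t, ht⟩ := hmod
  have hx : π * t ≠ 0 := ht ▸ sub_ne_zero.mpr hab
  have hNx : Ideal.absNorm (Ideal.span {π * t}) < Ideal.absNorm (P (m + 1)) ^ 2 := by
    rw [← ht, ← Nat.cast_lt (α := ℚ), NumberField.natCast_absNorm_span_singleton,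
      Ideal.absNorm_eq_natCard]
    push_cast
    exact hN
  have htS : IsSUnit {Q | ∃ i, 1 ≤ i ∧ i ≤ m ∧ Q = P i} (t : qF B D) := by
    refine IsSUnit.coe_of_forall_notMem (right_ne_zero_of_mul hx) fun Q hQ hQ0 hQS htQ => ?_
    have hPQ : Ideal.absNorm (P (m + 1)) ≤ Ideal.absNorm Q := by
      simpa only [Ideal.absNorm_eq_natCard] using
        natCard_quotient_succ_le_of_notMem P hPsurj hPmono hQ hQ0 hQS
    refine Ideal.notMem_mul_of_absNorm_lt hx ?_
      (Ideal.mul_mem_mul (hπ ▸ Ideal.mem_span_singleton_self π) htQ)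
    exact hNx.trans_le (by rw [sq]; exact Nat.mul_le_mul_left _ hPQ)
  refine ⟨Units.mk0 _ (div_ne_zero ha.1 hb.1),
    Subgroup.subset_closure ⟨ha.div hb, t / b, htS.div hb, ?_⟩, rfl⟩
  have hcoe := congrArg (algebraMap (𝓞 (qF B D)) (qF B D)) ht
  rw [map_sub, map_mul] at hcoe
  rw [Units.val_mk0]
  field_simp [hb.1]
  linear_combination hcoe

/-- (`P` enumerates the nonzero prime ideals of `O_F` with nondecreasing
norms, indexed by `1, 2, …`; `S_m = {P 1, …, P m}`, `U_m` is the group of `S_m`-units, `π`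
generates `P (m+1)`, and `U′₁` is the subgroup of `F^×` generated by `(1 + π·U_m) ∩ U_m`;
the class number of `F` is `1`.) If `a, b ∈ O_F ∩ U_m` satisfy `a ≡ b (mod P (m+1))` and
`N(a − b) < N(P (m+1))²`, then `a/b ∈ U′₁`. -/
theorem statement12 (B C D : ℕ) (hB : 0 < B) (hC : 0 < C) (hD : D = B ^ 2 + C ^ 2)
    (hsf : Squarefree D)
    (hPID : ∀ I : Ideal (𝓞 (qF B D)), I.IsPrincipal)
    (P : ℕ → Ideal (𝓞 (qF B D)))
    (hPprime : ∀ i, 1 ≤ i → (P i).IsPrime ∧ P i ≠ ⊥)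
    (hPinj : ∀ i j, 1 ≤ i → 1 ≤ j → P i = P j → i = j)
    (hPsurj : ∀ Q : Ideal (𝓞 (qF B D)), Q.IsPrime → Q ≠ ⊥ → ∃ i, 1 ≤ i ∧ P i = Q)
    (hPmono : ∀ i j, 1 ≤ i → i ≤ j →
      Nat.card (𝓞 (qF B D) ⧸ P i) ≤ Nat.card (𝓞 (qF B D) ⧸ P j))
    (m : ℕ)
    (π : 𝓞 (qF B D)) (hπ : P (m + 1) = Ideal.span {π})
    (a b : 𝓞 (qF B D))
    (ha : IsSUnit {Q | ∃ i, 1 ≤ i ∧ i ≤ m ∧ Q = P i} ((a : qF B D)))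
    (hb : IsSUnit {Q | ∃ i, 1 ≤ i ∧ i ≤ m ∧ Q = P i} ((b : qF B D)))
    (hmod : a - b ∈ P (m + 1))
    (hN : |(Algebra.norm ℚ ((a : qF B D) - (b : qF B D)) : ℚ)| <
      ((Nat.card (𝓞 (qF B D) ⧸ P (m + 1)) : ℚ)) ^ 2) :
    ∃ u : (qF B D)ˣ,
      u ∈ Subgroup.closure {u : (qF B D)ˣ |
        IsSUnit {Q | ∃ i, 1 ≤ i ∧ i ≤ m ∧ Q = P i} ((u : qF B D)) ∧
        ∃ w : qF B D, IsSUnit {Q | ∃ i, 1 ≤ i ∧ i ≤ m ∧ Q = P i} w ∧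
          (u : qF B D) = 1 + (π : qF B D) * w} ∧
      (u : qF B D) = (a : qF B D) / (b : qF B D) :=
  statement12_general B D P hPsurj hPmono m π hπ a b ha hb hmod hN
end
end

section
/- Let ξ ∈ F^× be a unit with 0 < |σ(ξ)| ≤ |ξ|, let c₁, c₂ > 0, and define c′ = max{c₁|σ(ξ)|/|ξ| + c₂|ξ|/|σ(ξ)|, c₂|σ(ξ)|/|ξ| + c₁|ξ|/|σ(ξ)|}. Let α, w, c ∈ O_F be nonzero elements satisfying N(w) ≤ N(α), |σ(ξ)| ≤ |σ(w)|/|w| ≤ |ξ|, |σ(ξ)| ≤ |σ(α)|/|α| ≤ |ξ|, |c| ≤ c₁|α| and |σ(c)| ≤ c₂|σ(α)|. Then N(w − c) ≤ (1 + c₁c₂ + c′)²·N(α). -/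
/-!
The triangle inequality gives `|w - c| |σ(w - c)| ≤ (|w| + c₁|α|)(|σ w| + c₂|σ α|)`, and
`N(w) ≤ N(α)` gives `|w| |σ w| ≤ |α| |σ α|`, so only the cross terms `c₂ x + c₁ y` need bounding, where
`x = |w| / |α|` and `y = |σ w| / |σ α|`. With `u = |σ ξ| / |ξ| ≤ 1` the hypotheses say `x y ≤ 1`
and `u ≤ y / x ≤ u⁻¹`, which force `x, y ≤ u⁻¹` and `x + y ≤ u + u⁻¹`. If `c₁ ≤ c₂`, then
`c₂ x + c₁ y = c₁ (x + y) + (c₂ - c₁) x ≤ c₁ u + c₂ u⁻¹`, and symmetrically otherwise; this is `c'`.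
-/

open IntermediateField NumberField

noncomputable section

/-- `β₃ = i·√(D − B√D)`. -/
def qβ₃ (B D : ℕ) : ℂ :=
  Complex.I * ((Real.sqrt ((D : ℝ) - (B : ℝ) * Real.sqrt (D : ℝ)) : ℝ) : ℂ)

/-- The complex absolute value of an element of `F`, via the inclusion `F ⊆ ℂ`. -/
def qAbs {B D : ℕ} (x : qF B D) : ℝ := ‖(x : ℂ)‖

/-- `N(x) = |x|²·|σ(x)|²`, the absolute value of the field norm of `x ∈ F`. -/
def qNorm {B D : ℕ} (σ : qF B D ≃ₐ[ℚ] qF B D) (x : qF B D) : ℝ :=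
  qAbs x ^ 2 * qAbs (σ x) ^ 2

section RatioBounds

variable {u x y : ℝ}

lemma le_inv_of_mul_le_of_mul_le_one (hu : 0 < u) (hu1 : u ≤ 1) (hx : 0 ≤ x)
    (hxy : x * y ≤ 1) (h : u * x ≤ y) : x ≤ u⁻¹ := by
  rw [← one_div, le_div_iff₀ hu]
  have hux2 : u * x ^ 2 ≤ 1 := by nlinarith [mul_le_mul_of_nonneg_left h hx]
  rcases le_total x 1 with hx1 | hx1 <;> nlinarith

lemma add_le_add_inv_of_mul_le (hu : 0 < u) (hu1 : u ≤ 1) (hx : 0 ≤ x) (hy : 0 ≤ y)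
    (hxy : x * y ≤ 1) (hux : u * x ≤ y) (huy : u * y ≤ x) : x + y ≤ u + u⁻¹ := by
  rcases lt_or_ge x u with hxu | hxu
  · linarith [le_inv_of_mul_le_of_mul_le_one hu hu1 hy (by linarith) huy]
  rcases lt_or_ge y u with hyu | hyu
  · linarith [le_inv_of_mul_le_of_mul_le_one hu hu1 hx hxy hux]
  -- `(x - u) * (y - u) ≥ 0` turns `x * y ≤ 1` into `u * (x + y) ≤ 1 + u ^ 2`.
  have key : u * (x + y) ≤ u * (u + u⁻¹) := by
    rw [mul_add u u, mul_inv_cancel₀ hu.ne']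
    nlinarith [mul_nonneg (sub_nonneg.2 hxu) (sub_nonneg.2 hyu)]
  exact le_of_mul_le_mul_left key hu

lemma mul_add_mul_le_max {c₁ c₂ : ℝ} (hc₁ : 0 ≤ c₁) (hc₂ : 0 ≤ c₂) (hu : 0 < u) (hu1 : u ≤ 1)
    (hx : 0 ≤ x) (hy : 0 ≤ y) (hxy : x * y ≤ 1) (hux : u * x ≤ y) (huy : u * y ≤ x) :
    c₂ * x + c₁ * y ≤ max (c₁ * u + c₂ * u⁻¹) (c₂ * u + c₁ * u⁻¹) := by
  have hsum := add_le_add_inv_of_mul_le hu hu1 hx hy hxy hux huy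
  have hx' := le_inv_of_mul_le_of_mul_le_one hu hu1 hx hxy hux
  have hy' := le_inv_of_mul_le_of_mul_le_one hu hu1 hy (by linarith) huy
  rcases le_total c₁ c₂ with hc | hc
  · refine le_max_of_le_left ?_
    nlinarith [mul_le_mul_of_nonneg_left hsum hc₁, mul_le_mul_of_nonneg_left hx' (sub_nonneg.2 hc)]
  · refine le_max_of_le_right ?_
    nlinarith [mul_le_mul_of_nonneg_left hsum hc₂, mul_le_mul_of_nonneg_left hy' (sub_nonneg.2 hc)]

end RatioBounds

lemma mul_add_mul_le_max_mul {s t c₁ c₂ A A' W W' : ℝ} (hs : 0 < s) (hst : s ≤ t)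
    (hc₁ : 0 ≤ c₁) (hc₂ : 0 ≤ c₂) (hA : 0 < A) (hA' : 0 < A') (hW : 0 < W) (hW' : 0 < W')
    (hWA : W * W' ≤ A * A') (hW₁ : s ≤ W' / W) (hW₂ : W' / W ≤ t)
    (hA₁ : s ≤ A' / A) (hA₂ : A' / A ≤ t) :
    c₂ * W * A' + c₁ * A * W' ≤
      max (c₁ * s / t + c₂ * t / s) (c₂ * s / t + c₁ * t / s) * (A * A') := by
  have ht : 0 < t := hs.trans_le hst
  rw [le_div_iff₀ hW] at hW₁
  rw [div_le_iff₀ hW] at hW₂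
  rw [le_div_iff₀ hA] at hA₁
  rw [div_le_iff₀ hA] at hA₂
  have hux : s / t * (W / A) ≤ W' / A' := by
    rw [div_mul_div_comm, div_le_div_iff₀ (by positivity) hA']
    nlinarith [mul_le_mul_of_nonneg_right hW₁ hA'.le, mul_le_mul_of_nonneg_left hA₂ hW'.le]
  have huy : s / t * (W' / A') ≤ W / A := by
    rw [div_mul_div_comm, div_le_div_iff₀ (by positivity) hA]
    nlinarith [mul_le_mul_of_nonneg_right hA₁ hW.le, mul_le_mul_of_nonneg_left hW₂ hA.le]
  have hxy : W / A * (W' / A') ≤ 1 := by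
    rw [div_mul_div_comm, div_le_one (by positivity)]
    exact hWA
  have key := mul_add_mul_le_max hc₁ hc₂ (div_pos hs ht) ((div_le_one ht).2 hst)
    (div_pos hW hA).le (div_pos hW' hA').le hxy hux huy
  simp only [inv_div, ← mul_div_assoc] at key
  calc c₂ * W * A' + c₁ * A * W' = (c₂ * W / A + c₁ * W' / A') * (A * A') := by
        field_simp
    _ ≤ _ := mul_le_mul_of_nonneg_right key (by positivity)

lemma qAbs_nonneg {B D : ℕ} (x : qF B D) : 0 ≤ qAbs x := norm_nonneg _

lemma qAbs_pos {B D : ℕ} {x : qF B D} (h : x ≠ 0) : 0 < qAbs x :=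
  norm_pos_iff.2 (by exact_mod_cast h)

lemma qAbs_sub_le {B D : ℕ} (x y : qF B D) : qAbs (x - y) ≤ qAbs x + qAbs y :=
  norm_sub_le (x : ℂ) y

lemma qNorm_eq_sq {B D : ℕ} (σ : qF B D ≃ₐ[ℚ] qF B D) (x : qF B D) :
    qNorm σ x = (qAbs x * qAbs (σ x)) ^ 2 :=
  (mul_pow _ _ _).symm

lemma qAbs_mul_le_of_qNorm_le {B D : ℕ} {σ : qF B D ≃ₐ[ℚ] qF B D} {x y : qF B D}
    (h : qNorm σ x ≤ qNorm σ y) : qAbs x * qAbs (σ x) ≤ qAbs y * qAbs (σ y) := by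
  rw [qNorm_eq_sq, qNorm_eq_sq] at h
  exact (pow_le_pow_iff_left₀ (mul_nonneg (qAbs_nonneg _) (qAbs_nonneg _))
    (mul_nonneg (qAbs_nonneg _) (qAbs_nonneg _)) two_ne_zero).1 h

theorem statement14_general (B D : ℕ)
    (σ : qF B D ≃ₐ[ℚ] qF B D)
    (ξ : (𝓞 (qF B D))ˣ)
    (hσξpos : 0 < qAbs (σ ((ξ : 𝓞 (qF B D)) : qF B D)))
    (hσξle : qAbs (σ ((ξ : 𝓞 (qF B D)) : qF B D)) ≤ qAbs ((ξ : 𝓞 (qF B D)) : qF B D))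
    (c₁ c₂ : ℝ) (hc₁ : 0 < c₁) (hc₂ : 0 < c₂)
    (c' : ℝ)
    (hc' : c' = max
      (c₁ * qAbs (σ ((ξ : 𝓞 (qF B D)) : qF B D)) / qAbs ((ξ : 𝓞 (qF B D)) : qF B D) +
        c₂ * qAbs ((ξ : 𝓞 (qF B D)) : qF B D) / qAbs (σ ((ξ : 𝓞 (qF B D)) : qF B D)))
      (c₂ * qAbs (σ ((ξ : 𝓞 (qF B D)) : qF B D)) / qAbs ((ξ : 𝓞 (qF B D)) : qF B D) +
        c₁ * qAbs ((ξ : 𝓞 (qF B D)) : qF B D) / qAbs (σ ((ξ : 𝓞 (qF B D)) : qF B D))))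
    (α w c : 𝓞 (qF B D)) (hα : α ≠ 0) (hw : w ≠ 0)
    (hNw : qNorm σ ((w : 𝓞 (qF B D)) : qF B D) ≤ qNorm σ ((α : 𝓞 (qF B D)) : qF B D))
    (hw1 : qAbs (σ ((ξ : 𝓞 (qF B D)) : qF B D)) ≤
      qAbs (σ ((w : 𝓞 (qF B D)) : qF B D)) / qAbs ((w : 𝓞 (qF B D)) : qF B D))
    (hw2 : qAbs (σ ((w : 𝓞 (qF B D)) : qF B D)) / qAbs ((w : 𝓞 (qF B D)) : qF B D) ≤
      qAbs ((ξ : 𝓞 (qF B D)) : qF B D))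
    (hα1 : qAbs (σ ((ξ : 𝓞 (qF B D)) : qF B D)) ≤
      qAbs (σ ((α : 𝓞 (qF B D)) : qF B D)) / qAbs ((α : 𝓞 (qF B D)) : qF B D))
    (hα2 : qAbs (σ ((α : 𝓞 (qF B D)) : qF B D)) / qAbs ((α : 𝓞 (qF B D)) : qF B D) ≤
      qAbs ((ξ : 𝓞 (qF B D)) : qF B D))
    (hcb : qAbs ((c : 𝓞 (qF B D)) : qF B D) ≤ c₁ * qAbs ((α : 𝓞 (qF B D)) : qF B D))
    (hσcb : qAbs (σ ((c : 𝓞 (qF B D)) : qF B D)) ≤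
      c₂ * qAbs (σ ((α : 𝓞 (qF B D)) : qF B D))) :
    qNorm σ (((w - c : 𝓞 (qF B D)) : qF B D)) ≤
      (1 + c₁ * c₂ + c') ^ 2 * qNorm σ ((α : 𝓞 (qF B D)) : qF B D) := by
  have hαF : ((α : 𝓞 (qF B D)) : qF B D) ≠ 0 := by exact_mod_cast hα
  have hwF : ((w : 𝓞 (qF B D)) : qF B D) ≠ 0 := by exact_mod_cast hw
  have hWA := qAbs_mul_le_of_qNorm_le hNw
  have hcross := mul_add_mul_le_max_mul hσξpos hσξle hc₁.le hc₂.le (qAbs_pos hαF)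
    (qAbs_pos ((map_ne_zero σ).2 hαF)) (qAbs_pos hwF) (qAbs_pos ((map_ne_zero σ).2 hwF))
    hWA hw1 hw2 hα1 hα2
  rw [← hc'] at hcross
  have hsub := qAbs_sub_le (w : qF B D) c
  have hσsub := qAbs_sub_le (σ w) (σ c)
  rw [qNorm_eq_sq, qNorm_eq_sq, ← mul_pow]
  push_cast
  rw [map_sub]
  refine pow_le_pow_left₀ (mul_nonneg (qAbs_nonneg _) (qAbs_nonneg _)) ?_ 2
  set A := qAbs (α : qF B D)
  set A' := qAbs (σ α)
  set W := qAbs (w : qF B D)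
  set W' := qAbs (σ w)
  calc _ ≤ (W + c₁ * A) * (W' + c₂ * A') :=
        mul_le_mul (by linarith) (by linarith) (qAbs_nonneg _)
          (by linarith [qAbs_nonneg (w - c : qF B D)])
    _ ≤ (1 + c₁ * c₂ + c') * (A * A') := by linear_combination hWA + hcross

/-- Let `ξ` be a unit with `0 < |σ(ξ)| ≤ |ξ|`, let `c₁, c₂ > 0`, and
`c′ = max{c₁|σ(ξ)|/|ξ| + c₂|ξ|/|σ(ξ)|, c₂|σ(ξ)|/|ξ| + c₁|ξ|/|σ(ξ)|}`. If the nonzero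
`α, w, c ∈ O_F` satisfy `N(w) ≤ N(α)`, `|σ(ξ)| ≤ |σ(w)|/|w| ≤ |ξ|`,
`|σ(ξ)| ≤ |σ(α)|/|α| ≤ |ξ|`, `|c| ≤ c₁|α|` and `|σ(c)| ≤ c₂|σ(α)|`, then
`N(w − c) ≤ (1 + c₁c₂ + c′)²·N(α)`. -/
theorem statement14 (B C D : ℕ) (hB : 0 < B) (hC : 0 < C) (hD : D = B ^ 2 + C ^ 2)
    (hsf : Squarefree D)
    (σ : qF B D ≃ₐ[ℚ] qF B D)
    (hσ : ((σ ⟨qβ B D, mem_adjoin_simple_self ℚ (qβ B D)⟩ : qF B D) : ℂ) = -(qβ₃ B D))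
    (ξ : (𝓞 (qF B D))ˣ)
    (hσξpos : 0 < qAbs (σ ((ξ : 𝓞 (qF B D)) : qF B D)))
    (hσξle : qAbs (σ ((ξ : 𝓞 (qF B D)) : qF B D)) ≤ qAbs ((ξ : 𝓞 (qF B D)) : qF B D))
    (c₁ c₂ : ℝ) (hc₁ : 0 < c₁) (hc₂ : 0 < c₂)
    (c' : ℝ)
    (hc' : c' = max
      (c₁ * qAbs (σ ((ξ : 𝓞 (qF B D)) : qF B D)) / qAbs ((ξ : 𝓞 (qF B D)) : qF B D) +
        c₂ * qAbs ((ξ : 𝓞 (qF B D)) : qF B D) / qAbs (σ ((ξ : 𝓞 (qF B D)) : qF B D)))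
      (c₂ * qAbs (σ ((ξ : 𝓞 (qF B D)) : qF B D)) / qAbs ((ξ : 𝓞 (qF B D)) : qF B D) +
        c₁ * qAbs ((ξ : 𝓞 (qF B D)) : qF B D) / qAbs (σ ((ξ : 𝓞 (qF B D)) : qF B D))))
    (α w c : 𝓞 (qF B D)) (hα : α ≠ 0) (hw : w ≠ 0) (hcne : c ≠ 0)
    (hNw : qNorm σ ((w : 𝓞 (qF B D)) : qF B D) ≤ qNorm σ ((α : 𝓞 (qF B D)) : qF B D))
    (hw1 : qAbs (σ ((ξ : 𝓞 (qF B D)) : qF B D)) ≤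
      qAbs (σ ((w : 𝓞 (qF B D)) : qF B D)) / qAbs ((w : 𝓞 (qF B D)) : qF B D))
    (hw2 : qAbs (σ ((w : 𝓞 (qF B D)) : qF B D)) / qAbs ((w : 𝓞 (qF B D)) : qF B D) ≤
      qAbs ((ξ : 𝓞 (qF B D)) : qF B D))
    (hα1 : qAbs (σ ((ξ : 𝓞 (qF B D)) : qF B D)) ≤
      qAbs (σ ((α : 𝓞 (qF B D)) : qF B D)) / qAbs ((α : 𝓞 (qF B D)) : qF B D))
    (hα2 : qAbs (σ ((α : 𝓞 (qF B D)) : qF B D)) / qAbs ((α : 𝓞 (qF B D)) : qF B D) ≤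
      qAbs ((ξ : 𝓞 (qF B D)) : qF B D))
    (hcb : qAbs ((c : 𝓞 (qF B D)) : qF B D) ≤ c₁ * qAbs ((α : 𝓞 (qF B D)) : qF B D))
    (hσcb : qAbs (σ ((c : 𝓞 (qF B D)) : qF B D)) ≤
      c₂ * qAbs (σ ((α : 𝓞 (qF B D)) : qF B D))) :
    qNorm σ (((w - c : 𝓞 (qF B D)) : qF B D)) ≤
      (1 + c₁ * c₂ + c') ^ 2 * qNorm σ ((α : 𝓞 (qF B D)) : qF B D) :=
  statement14_general B D σ ξ hσξpos hσξle c₁ c₂ hc₁ hc₂ c' hc' α w c hα hw hNw hw1 hw2 hα1 hα2 hcb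
    hσcb
end
end

section
/- For each of the three fields F = ℚ(√(−(2 + √2))), F = ℚ(√(−(13 + 2√13))) and F = ℚ(√(−(29 + 2√29))), there is exactly one prime ideal of the ring of integers O_F lying above the rational prime 2. -/
open IntermediateField NumberField

noncomputable section

/-- `P` is a prime ideal of `O_F` lying above the rational prime `2`,
i.e. `P ∩ ℤ = 2ℤ`. -/
def LiesAboveTwo {B D : ℕ} (P : Ideal (𝓞 (qF B D))) : Prop :=
  P.IsPrime ∧ Ideal.comap (algebraMap ℤ (𝓞 (qF B D))) P = Ideal.span {(2 : ℤ)}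

/-!
For `(B, D) = (1, 2)`, `β` is a root of the `2`-Eisenstein polynomial `X⁴ + 4X² + 2`, and
`2 = β⁴ (2β² + 7)` with `2β² + 7` a unit. Hence `(2) = (β)⁴`, so `(β)` has norm `2`; it is therefore
prime, and it is the only prime containing `2`.

For `D = 4k + 1` with `k` odd (`D = 13` and `D = 29`, `B = 2`), the algebraic integer
`γ = (β + √D) / 2` is a root of `X⁴ + DX + kD ≡ X⁴ + X + 1 (mod 2)`, which is irreducible over `𝔽₂`.
So `γ` induces an embedding of `𝔽₁₆` into `O_F / (2)`, which also has `N(2) = 2⁴` elements; hence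
`O_F / (2)` is a field and `2` is inert.
-/

open Polynomial

theorem irreducible_X_pow_four_add_X_add_one : Irreducible (X ^ 4 + X + 1 : (ZMod 2)[X]) := by
  have hmonic : (X ^ 4 + X + 1 : (ZMod 2)[X]).Monic := by monicity!
  have hdeg : (X ^ 4 + X + 1 : (ZMod 2)[X]).natDegree = 4 := by compute_degree!
  have hne : (X ^ 4 + X + 1 : (ZMod 2)[X]) ≠ 1 := fun h => by simp [h] at hdeg
  rw [hmonic.irreducible_iff_lt_natDegree_lt hne, hdeg]
  intro q hq hqdeg hqf
  rw [Finset.mem_Ioc] at hqdeg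
  obtain ⟨r, hr, hrq⟩ := WfDvdMonoid.exists_irreducible_factor
    (fun hu => by simp [natDegree_eq_zero_of_isUnit hu] at hqdeg) hq.ne_zero
  -- `r` has degree dividing `2`, so it divides `X ^ 4 - X = (X ^ 4 + X + 1) - 1`
  have hr2 : r.natDegree ∣ 2 := by
    have := hr.natDegree_pos
    have : r.natDegree ≤ 2 := by have := natDegree_le_of_dvd hrq hq.ne_zero; omega
    interval_cases r.natDegree <;> norm_num
  rw [hr.natDegree_dvd_iff_dvd_X_pow_card_pow_sub_X, Nat.card_zmod] at hr2
  have htwo : (2 : (ZMod 2)[X]) = 0 := by simpa using CharP.cast_eq_zero (ZMod 2)[X] 2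
  have hsub : (X ^ 4 + X + 1 : (ZMod 2)[X]) - (X ^ 2 ^ 2 - X) = 1 := by
    linear_combination X * htwo
  have hr1 : r ∣ 1 := hsub ▸ dvd_sub (hrq.trans hqf) hr2
  exact hr.not_isUnit (isUnit_of_dvd_one hr1)

theorem Ideal.isMaximal_of_natCard_quotient_eq_pow {R : Type*} [CommRing R] {I : Ideal R}
    {p : ℕ} [hp : Fact p.Prime] (hpI : (p : R) ∈ I) {f : ℤ[X]} {γ : R} (hγ : aeval γ f ∈ I)
    (hf : Irreducible (f.map (Int.castRingHom (ZMod p))))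
    (hcard : Nat.card (R ⧸ I) = p ^ (f.map (Int.castRingHom (ZMod p))).natDegree) :
    I.IsMaximal := by
  have := Fact.mk hf
  have : Finite (R ⧸ I) := Nat.finite_of_card_ne_zero (by simp [hcard, hp.out.ne_zero])
  have : Nontrivial (R ⧸ I) := Finite.one_lt_card_iff_nontrivial.mp <| by
    rw [hcard]; exact Nat.one_lt_pow hf.natDegree_pos.ne' hp.out.one_lt
  have : CharP (R ⧸ I) p := (CharP.charP_iff_prime_eq_zero hp.out).mpr <| by
    rw [← map_natCast (Ideal.Quotient.mk I), Ideal.Quotient.eq_zero_iff_mem]; exact hpI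
  -- `γ` induces a map from the field `𝔽_p[X] / (f mod p)`, which has as many elements as `R ⧸ I`
  let φ : AdjoinRoot (f.map (Int.castRingHom (ZMod p))) →+* R ⧸ I :=
    AdjoinRoot.lift (ZMod.castHom dvd_rfl _) (Ideal.Quotient.mk I γ) <| by
      rw [eval₂_map, RingHom.ext_int (RingHom.comp _ _) (algebraMap ℤ _), ← aeval_def,
        ← Ideal.Quotient.mkₐ_eq_mk ℤ, aeval_algHom_apply, Ideal.Quotient.mkₐ_eq_mk,
        Ideal.Quotient.eq_zero_iff_mem]
      exact hγ
  have hcardK : Nat.card (AdjoinRoot (f.map (Int.castRingHom (ZMod p)))) =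
      p ^ (f.map (Int.castRingHom (ZMod p))).natDegree := by
    have := (AdjoinRoot.powerBasis hf.ne_zero).finite
    rw [Module.natCard_eq_pow_finrank (K := ZMod p), Nat.card_zmod,
      (AdjoinRoot.powerBasis hf.ne_zero).finrank, AdjoinRoot.powerBasis_dim]
  have hφ : Function.Bijective φ := φ.injective.bijective_of_nat_card_le (by rw [hcard, hcardK])
  exact Ideal.Quotient.maximal_of_isField I
    ((RingEquiv.ofBijective φ hφ).symm.toMulEquiv.isField (Field.toIsField _))

theorem Ideal.comap_algebraMap_int_eq_span_iff {R : Type*} [CommRing R] {P : Ideal R}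
    [hP : P.IsPrime] {p : ℕ} [Fact p.Prime] :
    P.comap (algebraMap ℤ R) = Ideal.span {(p : ℤ)} ↔ (p : R) ∈ P := by
  refine ⟨fun h => ?_, fun h => ?_⟩
  · simpa using h.ge (Ideal.mem_span_singleton_self (p : ℤ))
  · refine ((Int.ideal_span_isMaximal_of_prime p).eq_of_le (hP.comap _).ne_top ?_).symm
    simpa [Ideal.span_le] using h

theorem Ideal.existsUnique_isPrime_mem_of_isMaximal_radical {R : Type*} [CommRing R] {a : R}
    (h : (Ideal.span {a}).radical.IsMaximal) : ∃! P : Ideal R, P.IsPrime ∧ a ∈ P := by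
  refine ⟨_, ⟨h.isPrime, Ideal.le_radical (Ideal.mem_span_singleton_self a)⟩, ?_⟩
  rintro P ⟨hP, haP⟩
  exact (h.eq_of_le hP.ne_top
    (hP.radical_le_iff.mpr ((Ideal.span_singleton_le_iff_mem P).mpr haP))).symm

theorem absNorm_span_two_eq_two_pow_finrank (K : Type*) [Field K] [NumberField K] :
    Ideal.absNorm (Ideal.span {(2 : 𝓞 K)}) = 2 ^ Module.finrank ℚ K := by
  simpa [RingOfIntegers.rank] using Ideal.absNorm_span_natCast (S := 𝓞 K) 2

def qPoly (B D : ℕ) : ℤ[X] := X ^ 4 + C (2 * D : ℤ) * X ^ 2 + C ((D : ℤ) ^ 2 - B ^ 2 * D)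

section qPoly

variable {B D : ℕ}

theorem qPoly_monic : (qPoly B D).Monic := by unfold qPoly; monicity!

theorem qPoly_natDegree : (qPoly B D).natDegree = 4 := by unfold qPoly; compute_degree!

theorem aeval_qPoly {A : Type*} [CommRing A] (x : A) :
    aeval x (qPoly B D) = (x ^ 2 + D) ^ 2 - B ^ 2 * D := by
  simp [qPoly, map_ofNat]
  ring

theorem irreducible_qPoly {p : ℕ} (hp : p.Prime) (hpD : p ∣ D)
    (hc : ¬ (p : ℤ) ^ 2 ∣ (D : ℤ) ^ 2 - B ^ 2 * D) : Irreducible (qPoly B D) := by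
  have hpZ : (Ideal.span {(p : ℤ)}).IsPrime :=
    (Ideal.span_singleton_prime (by exact_mod_cast hp.ne_zero)).mpr (Nat.prime_iff_prime_int.mp hp)
  refine (qPoly_monic.isEisensteinAt_of_mem_of_notMem hpZ.ne_top (fun {n} hn => ?_) ?_).irreducible
    hpZ qPoly_monic.isPrimitive (by rw [qPoly_natDegree]; norm_num)
  · have hpD' : (p : ℤ) ∣ D := by exact_mod_cast hpD
    rw [qPoly_natDegree] at hn
    rw [Ideal.mem_span_singleton]
    interval_cases n <;> simp only [qPoly, coeff_add, coeff_C_mul, coeff_X_pow, coeff_C] <;>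
      norm_num
    · exact dvd_sub (dvd_pow hpD' two_ne_zero) (dvd_mul_of_dvd_right hpD' _)
    · exact dvd_mul_of_dvd_right hpD' _
  · simp only [qPoly, coeff_add, coeff_C_mul, coeff_X_pow, coeff_C, Ideal.span_singleton_pow,
      Ideal.mem_span_singleton]
    norm_num
    exact hc

end qPoly

theorem qβ_sq_add_sq (B D : ℕ) : (qβ B D ^ 2 + D) ^ 2 = B ^ 2 * D := by
  have hs : ((Real.sqrt D : ℝ) : ℂ) ^ 2 = D := by
    rw [← Complex.ofReal_pow, Real.sq_sqrt (Nat.cast_nonneg D)]; simp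
  have hβ : qβ B D ^ 2 = -(D + B * ((Real.sqrt D : ℝ) : ℂ)) := by
    rw [qβ, mul_pow, Complex.I_sq, ← Complex.ofReal_pow, Real.sq_sqrt (by positivity)]
    push_cast; ring
  linear_combination (qβ B D ^ 2 + D - B * ((Real.sqrt D : ℝ) : ℂ)) * hβ + B ^ 2 * hs

theorem isIntegral_qβ (B D : ℕ) : IsIntegral ℤ (qβ B D) :=
  ⟨qPoly B D, qPoly_monic, by rw [← aeval_def, aeval_qPoly, qβ_sq_add_sq, sub_self]⟩

instance inst_s18 (B D : ℕ) : NumberField (qF B D) where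
  to_finiteDimensional := adjoin.finiteDimensional (isIntegral_qβ B D).tower_top

theorem finrank_qF {B D : ℕ} (h : Irreducible (qPoly B D)) : Module.finrank ℚ (qF B D) = 4 := by
  have hmin : minpoly ℚ (qβ B D) = (qPoly B D).map (algebraMap ℤ ℚ) :=
    (minpoly.eq_of_irreducible_of_monic
      ((qPoly_monic.irreducible_iff_irreducible_map_fraction_map (K := ℚ)).mp h)
      (by rw [aeval_map_algebraMap, aeval_qPoly, qβ_sq_add_sq, sub_self])
      (qPoly_monic.map _)).symm
  rw [qF, adjoin.finrank (isIntegral_qβ B D).tower_top, hmin,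
    qPoly_monic.natDegree_map, qPoly_natDegree]

theorem algebraMap_gen_qβ (B D : ℕ) :
    algebraMap (qF B D) ℂ (AdjoinSimple.gen ℚ (qβ B D)) = qβ B D :=
  AdjoinSimple.algebraMap_gen ℚ _

def qθ (B D : ℕ) : 𝓞 (qF B D) :=
  ⟨AdjoinSimple.gen ℚ (qβ B D), (isIntegral_algHom_iff (IsScalarTower.toAlgHom ℤ (qF B D) ℂ)
    (algebraMap (qF B D) ℂ).injective).mp <| by
      rw [IsScalarTower.coe_toAlgHom', algebraMap_gen_qβ]; exact isIntegral_qβ B D⟩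

theorem algebraMap_qθ (B D : ℕ) : algebraMap (qF B D) ℂ (qθ B D) = qβ B D :=
  algebraMap_gen_qβ B D

theorem qθ_sq_add_sq (B D : ℕ) : (qθ B D ^ 2 + D) ^ 2 = B ^ 2 * D := by
  apply RingOfIntegers.coe_injective
  apply (algebraMap (qF B D) ℂ).injective
  simpa only [map_pow, map_add, map_mul, map_natCast, algebraMap_qθ] using qβ_sq_add_sq B D

theorem liesAboveTwo_iff {B D : ℕ} (P : Ideal (𝓞 (qF B D))) :
    LiesAboveTwo P ↔ P.IsPrime ∧ (2 : 𝓞 (qF B D)) ∈ P :=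
  and_congr_right fun _ => by simpa using Ideal.comap_algebraMap_int_eq_span_iff (P := P) (p := 2)

theorem existsUnique_liesAboveTwo {B D : ℕ}
    (h : (Ideal.span {(2 : 𝓞 (qF B D))}).radical.IsMaximal) :
    ∃! P : Ideal (𝓞 (qF B D)), LiesAboveTwo P := by
  simpa only [liesAboveTwo_iff] using Ideal.existsUnique_isPrime_mem_of_isMaximal_radical h

section Ramified

theorem span_two_eq_span_qθ_pow_four :
    Ideal.span {(2 : 𝓞 (qF 1 2))} = Ideal.span {qθ 1 2} ^ 4 := by
  have hθ : (qθ 1 2 ^ 2 + 2) ^ 2 = 2 := by simpa using qθ_sq_add_sq 1 2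
  have hu : IsUnit (2 * qθ 1 2 ^ 2 + 7) :=
    IsUnit.of_mul_eq_one (-(2 * qθ 1 2 ^ 2 + 1)) (by linear_combination (-4) * hθ)
  have h2 : (2 : 𝓞 (qF 1 2)) = qθ 1 2 ^ 4 * (2 * qθ 1 2 ^ 2 + 7) := by
    linear_combination (1 - 2 * qθ 1 2 ^ 2) * hθ
  rw [h2, Ideal.span_singleton_mul_right_unit hu, Ideal.span_singleton_pow]

theorem isMaximal_span_qθ_one_two : (Ideal.span {qθ 1 2}).IsMaximal := by
  have hfin : Module.finrank ℚ (qF 1 2) = 4 :=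
    finrank_qF (irreducible_qPoly Nat.prime_two dvd_rfl (by norm_num))
  have hnorm : Ideal.absNorm (Ideal.span {qθ 1 2}) = 2 := by
    have h4 : Ideal.absNorm (Ideal.span {qθ 1 2}) ^ 4 = 2 ^ 4 := by
      rw [← map_pow, ← span_two_eq_span_qθ_pow_four, absNorm_span_two_eq_two_pow_finrank, hfin]
    exact Nat.pow_left_injective four_ne_zero h4
  have hprime := Ideal.isPrime_of_irreducible_absNorm (hnorm ▸ Nat.prime_two)
  exact hprime.isMaximal fun h => by simp [h] at hnorm

theorem existsUnique_liesAboveTwo_one_two : ∃! P : Ideal (𝓞 (qF 1 2)), LiesAboveTwo P := by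
  apply existsUnique_liesAboveTwo
  rw [span_two_eq_span_qθ_pow_four, Ideal.radical_pow _ four_ne_zero,
    isMaximal_span_qθ_one_two.isPrime.radical]
  exact isMaximal_span_qθ_one_two

end Ramified

section Inert

variable {k : ℕ}

def qPolyInert (k : ℕ) : ℤ[X] := X ^ 4 + C (4 * k + 1 : ℤ) * X + C (k * (4 * k + 1) : ℤ)

theorem qPolyInert_monic : (qPolyInert k).Monic := by unfold qPolyInert; monicity!

theorem aeval_qPolyInert {A : Type*} [CommRing A] (x : A) :
    aeval x (qPolyInert k) = x ^ 4 + (4 * k + 1) * x + k * (4 * k + 1) := by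
  simp [qPolyInert, map_ofNat]

theorem exists_aeval_qPolyInert_eq_zero :
    ∃ γ : 𝓞 (qF 2 (4 * k + 1)), aeval γ (qPolyInert k) = 0 := by
  have hθ := congrArg (algebraMap _ (qF 2 (4 * k + 1))) (qθ_sq_add_sq 2 (4 * k + 1))
  simp only [Nat.cast_add, Nat.cast_mul, Nat.cast_ofNat, Nat.cast_one, map_pow, map_add, map_mul,
    map_natCast, map_ofNat, map_one] at hθ
  generalize algebraMap _ (qF 2 (4 * k + 1)) (qθ 2 (4 * k + 1)) = g at hθ
  -- `γ = (β + √D) / 2`, since `√D = -(β ^ 2 + D) / 2`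
  set γ : qF 2 (4 * k + 1) := (2 * g - g ^ 2 - (4 * k + 1)) / 4
  have hγ : aeval γ (qPolyInert k) = 0 := by
    rw [aeval_qPolyInert]
    linear_combination (g ^ 4 / 256 - g ^ 3 / 32 + (4 * k + 1) * g ^ 2 / 128 + 3 * g ^ 2 / 32
      - (4 * k + 1) * g / 32 - g / 8 + (4 * k + 1) ^ 2 / 256 + (4 * k + 1) / 64 + 1 / 16) * hθ
  obtain ⟨γ', hγ'⟩ : ∃ γ' : 𝓞 (qF 2 (4 * k + 1)), (γ' : qF 2 (4 * k + 1)) = γ :=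
    ⟨⟨γ, ⟨qPolyInert k, qPolyInert_monic, hγ⟩⟩, rfl⟩
  refine ⟨γ', RingOfIntegers.coe_injective ?_⟩
  rwa [map_zero, ← aeval_algebraMap_apply, ← RingOfIntegers.coe_eq_algebraMap, hγ']

theorem map_qPolyInert_of_odd (hk : Odd k) :
    (qPolyInert k).map (Int.castRingHom (ZMod 2)) = X ^ 4 + X + 1 := by
  obtain ⟨m, rfl⟩ := hk
  have h1 : Int.castRingHom (ZMod 2) (4 * ↑(2 * m + 1) + 1) = 1 :=
    ZMod.intCast_eq_one_iff_odd.mpr ⟨4 * m + 2, by push_cast; ring⟩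
  have h2 : Int.castRingHom (ZMod 2) (↑(2 * m + 1) * (4 * ↑(2 * m + 1) + 1)) = 1 :=
    ZMod.intCast_eq_one_iff_odd.mpr ⟨8 * m ^ 2 + 9 * m + 2, by push_cast; ring⟩
  simp only [qPolyInert, Polynomial.map_add, Polynomial.map_mul, Polynomial.map_pow, map_X, map_C,
    h1, h2, map_one, one_mul]

theorem isMaximal_span_two_of_odd (hk : Odd k) (h : Irreducible (qPoly 2 (4 * k + 1))) :
    (Ideal.span {(2 : 𝓞 (qF 2 (4 * k + 1)))}).IsMaximal := by
  obtain ⟨γ, hγ⟩ := exists_aeval_qPolyInert_eq_zero (k := k)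
  have hirr := map_qPolyInert_of_odd hk ▸ irreducible_X_pow_four_add_X_add_one
  refine Ideal.isMaximal_of_natCard_quotient_eq_pow (p := 2)
    (by rw [Nat.cast_ofNat]; exact Ideal.mem_span_singleton_self _) (hγ ▸ Ideal.zero_mem _) hirr ?_
  rw [map_qPolyInert_of_odd hk, ← Submodule.cardQuot_apply, ← Ideal.absNorm_apply,
    absNorm_span_two_eq_two_pow_finrank, finrank_qF h,
    show (X ^ 4 + X + 1 : (ZMod 2)[X]).natDegree = 4 by compute_degree!]

theorem existsUnique_liesAboveTwo_of_odd (hk : Odd k) (h : Irreducible (qPoly 2 (4 * k + 1))) :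
    ∃! P : Ideal (𝓞 (qF 2 (4 * k + 1))), LiesAboveTwo P := by
  have hmax := isMaximal_span_two_of_odd hk h
  exact existsUnique_liesAboveTwo (hmax.isPrime.radical.symm ▸ hmax)

end Inert

/-- For each of the three fields `F = ℚ(√(−(2 + √2)))`,
`F = ℚ(√(−(13 + 2√13)))` and `F = ℚ(√(−(29 + 2√29)))`, there is exactly one prime ideal of
the ring of integers `O_F` lying above the rational prime `2`. -/
theorem statement18 :
    (∃! P : Ideal (𝓞 (qF 1 2)), LiesAboveTwo P) ∧
    (∃! P : Ideal (𝓞 (qF 2 13)), LiesAboveTwo P) ∧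
    (∃! P : Ideal (𝓞 (qF 2 29)), LiesAboveTwo P) :=
  ⟨existsUnique_liesAboveTwo_one_two,
    existsUnique_liesAboveTwo_of_odd (k := 3) (by decide)
      (irreducible_qPoly (p := 13) (by norm_num) dvd_rfl (by norm_num)),
    existsUnique_liesAboveTwo_of_odd (k := 7) (by decide)
      (irreducible_qPoly (p := 29) (by norm_num) dvd_rfl (by norm_num))⟩
end
end
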